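/- arXiv:1110.5793 — 3 statements merged into one kernel-verified Lean document; each statement's English description precedes it below -/
import Mathlib

section
/- For every dense scenario σ and every t ≥ 0, rbf_σ(t) ≤ U^max · t + C^max, where U^max = max_k (C^k / T^k) and C^max = max_k C^k. Consequently mrbf(t) := sup over all dense scenarios σ of rbf_σ(t) satisfies mrbf(t) ≤ U^max · t + C^max. -/
open Finset

/-- Number of jobs of a dense scenario released in `[0, t)`:
least `β` with `T^{σ 0} + ⋯ + T^{σ (β-1)} ≥ t`. -/
noncomputable def alphaFn {N : ℕ} (T : Fin N → ℕ) (σ : ℕ → Fin N) (t : ℕ) : ℕ :=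
  sInf {β : ℕ | t ≤ ∑ k ∈ Finset.range β, T (σ k)}

/-- Request bound function of a dense scenario. -/
noncomputable def rbf {N : ℕ} (C T : Fin N → ℕ) (σ : ℕ → Fin N) (t : ℕ) : ℕ :=
  ∑ k ∈ Finset.range (alphaFn T σ t), C (σ k)

/-- Maximum request bound function: sup over all dense scenarios. -/
noncomputable def mrbf {N : ℕ} (C T : Fin N → ℕ) (t : ℕ) : ℕ :=
  sSup {v : ℕ | ∃ σ : ℕ → Fin N, rbf C T σ t = v}


/-- rbf_σ(t) ≤ U^max · t + C^max for every dense scenario,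
hence also mrbf(t) ≤ U^max · t + C^max. -/
theorem rbf_le_ub {N : ℕ} (hN : 0 < N) (C T : Fin N → ℕ)
    (hC : ∀ k, 0 < C k) (hT : ∀ k, 0 < T k)
    (Umax Cmax : ℚ)
    (hU : ∀ k, (C k : ℚ) / T k ≤ Umax) (hU' : ∃ k, (C k : ℚ) / T k = Umax)
    (hCm : ∀ k, (C k : ℚ) ≤ Cmax) (hCm' : ∃ k, (C k : ℚ) = Cmax) :
    (∀ (σ : ℕ → Fin N) (t : ℕ), (rbf C T σ t : ℚ) ≤ Umax * t + Cmax) ∧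
    (∀ t : ℕ, (mrbf C T t : ℚ) ≤ Umax * t + Cmax) := by
  have hU0 : 0 ≤ Umax := by
    obtain ⟨k, hk⟩ := hU'
    rw [← hk]; positivity
  have hC0 : (0:ℚ) ≤ Cmax := by
    obtain ⟨k, hk⟩ := hCm'; rw [← hk]; positivity
  have hCT : ∀ j : Fin N, (C j : ℚ) ≤ Umax * T j := by
    intro j
    have ht : (0:ℚ) < T j := by exact_mod_cast hT j
    have h := hU j
    rw [div_le_iff₀ ht] at h
    linarith
  have main : ∀ (σ : ℕ → Fin N) (t : ℕ), (rbf C T σ t : ℚ) ≤ Umax * t + Cmax := by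
    intro σ t
    have hmem : (alphaFn T σ t) ∈ {β : ℕ | t ≤ ∑ k ∈ Finset.range β, T (σ k)} := by
      apply Nat.sInf_mem
      refine ⟨t, ?_⟩
      simp only [Set.mem_setOf_eq]
      calc t = ∑ _k ∈ Finset.range t, 1 := by simp
        _ ≤ ∑ k ∈ Finset.range t, T (σ k) := Finset.sum_le_sum (fun i _ => hT (σ i))
    rcases Nat.eq_zero_or_pos (alphaFn T σ t) with h0 | hpos
    · rw [rbf, h0]
      simp only [Finset.range_zero, Finset.sum_empty, Nat.cast_zero]
      positivity
    · set β := alphaFn T σ t - 1 with hβdef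
      have hsucc : alphaFn T σ t = β + 1 := (Nat.succ_pred_eq_of_pos hpos).symm
      have hβlt : β < alphaFn T σ t := by omega
      have hβnot : β ∉ {b : ℕ | t ≤ ∑ k ∈ Finset.range b, T (σ k)} :=
        Nat.notMem_of_lt_sInf hβlt
      simp only [Set.mem_setOf_eq, not_le] at hβnot
      have hsumlt : (∑ k ∈ Finset.range β, T (σ k)) < t := hβnot
      have hsumQ : ((∑ k ∈ Finset.range β, T (σ k) : ℕ) : ℚ) ≤ (t : ℚ) := by
        exact_mod_cast hsumlt.le
      rw [rbf, hsucc, Finset.sum_range_succ]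
      push_cast
      have h1 : (∑ k ∈ Finset.range β, (C (σ k) : ℚ)) ≤ Umax * t := by
        calc (∑ k ∈ Finset.range β, (C (σ k) : ℚ))
            ≤ ∑ k ∈ Finset.range β, Umax * (T (σ k) : ℚ) :=
              Finset.sum_le_sum (fun i _ => hCT (σ i))
          _ = Umax * ∑ k ∈ Finset.range β, (T (σ k) : ℚ) := by
              rw [Finset.mul_sum]
          _ ≤ Umax * t := by
              apply mul_le_mul_of_nonneg_left _ hU0
              exact_mod_cast hsumQ
      have h2 : (C (σ β) : ℚ) ≤ Cmax := hCm (σ β)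
      linarith
  refine ⟨main, ?_⟩
  intro t
  set V := {v : ℕ | ∃ σ : ℕ → Fin N, rbf C T σ t = v} with hV
  have hne : V.Nonempty := ⟨rbf C T (fun _ => ⟨0, hN⟩) t, ⟨_, rfl⟩⟩
  have hbdd : BddAbove V := by
    refine ⟨Nat.ceil (Umax * t + Cmax), ?_⟩
    rintro v ⟨σ, rfl⟩
    have h := main σ t
    have h2 : (rbf C T σ t : ℚ) ≤ (Nat.ceil (Umax * t + Cmax) : ℚ) :=
      h.trans (Nat.le_ceil _)
    exact_mod_cast h2
  obtain ⟨σ, hσ⟩ := Nat.sSup_mem hne hbdd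
  rw [mrbf, ← hV, ← hσ]
  exact main σ t
end

section
/- Suppose a partial scenario reaches point (t, v) with v < U^max · t − C^max (point strictly below lb − C^max where lb(t) = U^max t). Then for every continuation of the scenario and every t' ≥ t, the value of the continued request bound function at t' is strictly less than U^max · t'. In particular such a continuation never attains mrbf at any later time, since mrbf(t') ≥ U^max · t'. -/
open Finset

lemma sum_T_ge {N : ℕ} (T : Fin N → ℕ) (hT : ∀ k, 0 < T k) (σ : ℕ → Fin N) (β : ℕ) :
    β ≤ ∑ k ∈ Finset.range β, T (σ k) := by
  calc β = ∑ _k ∈ Finset.range β, 1 := by simp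
  _ ≤ _ := Finset.sum_le_sum fun k _ => hT (σ k)

lemma alpha_mem {N : ℕ} (T : Fin N → ℕ) (hT : ∀ k, 0 < T k) (σ : ℕ → Fin N) (t : ℕ) :
    t ≤ ∑ k ∈ Finset.range (alphaFn T σ t), T (σ k) := by
  have : alphaFn T σ t ∈ {β : ℕ | t ≤ ∑ k ∈ Finset.range β, T (σ k)} :=
    Nat.sInf_mem ⟨t, sum_T_ge T hT σ t⟩
  exact this

lemma alpha_le {N : ℕ} (T : Fin N → ℕ) (hT : ∀ k, 0 < T k) (σ : ℕ → Fin N) (t : ℕ) :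
    alphaFn T σ t ≤ t :=
  Nat.sInf_le (show t ∈ {β : ℕ | t ≤ ∑ k ∈ Finset.range β, T (σ k)} from sum_T_ge T hT σ t)

lemma alpha_min {N : ℕ} (T : Fin N → ℕ) (σ : ℕ → Fin N) (t β : ℕ)
    (h : β < alphaFn T σ t) : ∑ k ∈ Finset.range β, T (σ k) < t := by
  by_contra hc
  exact absurd (Nat.sInf_le (show β ∈ {β : ℕ | t ≤ ∑ k ∈ Finset.range β, T (σ k)} from le_of_not_gt hc)) (not_le.2 h)

lemma rbf_bdd {N : ℕ} (C T : Fin N → ℕ) (hT : ∀ k, 0 < T k) (t : ℕ) :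
    BddAbove {v : ℕ | ∃ σ : ℕ → Fin N, rbf C T σ t = v} := by
  refine ⟨t * (Finset.univ.sup C), ?_⟩
  rintro v ⟨σ, rfl⟩
  calc rbf C T σ t ≤ ∑ k ∈ Finset.range (alphaFn T σ t), Finset.univ.sup C :=
        Finset.sum_le_sum fun k _ => Finset.le_sup (Finset.mem_univ _)
  _ = alphaFn T σ t * Finset.univ.sup C := by simp [mul_comm]
  _ ≤ t * Finset.univ.sup C := Nat.mul_le_mul_right _ (alpha_le T hT σ t)

lemma le_mrbf {N : ℕ} (C T : Fin N → ℕ) (hT : ∀ k, 0 < T k) (σ : ℕ → Fin N) (t : ℕ) :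
    rbf C T σ t ≤ mrbf C T t :=
  le_csSup (rbf_bdd C T hT t) ⟨σ, rfl⟩


/-- a partial scenario reaching a point strictly below
U^max · t − C^max never attains mrbf after t: any continuation stays
strictly below the line U^max · t', hence strictly below mrbf(t'). -/
theorem below_band_never_attains_mrbf {N : ℕ} (hN : 0 < N) (C T : Fin N → ℕ)
    (hC : ∀ k, 0 < C k) (hT : ∀ k, 0 < T k)
    (Umax Cmax : ℚ)
    (hU : ∀ k, (C k : ℚ) / T k ≤ Umax) (hU' : ∃ k, (C k : ℚ) / T k = Umax)
    (hCm : ∀ k, (C k : ℚ) ≤ Cmax) (hCm' : ∃ k, (C k : ℚ) = Cmax)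
    (σ : ℕ → Fin N) (m t v : ℕ)
    (ht : t = ∑ k ∈ Finset.range m, T (σ k))
    (hv : v = ∑ k ∈ Finset.range m, C (σ k))
    (hbelow : (v : ℚ) < Umax * t - Cmax) :
    ∀ σ' : ℕ → Fin N, (∀ k < m, σ' k = σ k) →
      ∀ t' : ℕ, t ≤ t' →
        (rbf C T σ' t' : ℚ) < Umax * t' ∧
        rbf C T σ' t' < mrbf C T t' := by
  intro σ' hσ' t' ht'
  have hU0 : 0 < Umax := by
    obtain ⟨k, hk⟩ := hU'
    rw [← hk]
    have h1 : (0:ℚ) < C k := by exact_mod_cast hC k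
    have h2 : (0:ℚ) < T k := by exact_mod_cast hT k
    positivity
  have hCm0 : 0 ≤ Cmax := by
    obtain ⟨k, hk⟩ := hCm'
    rw [← hk]; positivity
  have hCT : ∀ k, (C k : ℚ) ≤ Umax * T k := by
    intro k
    have h2 : (0:ℚ) < T k := by exact_mod_cast hT k
    have := hU k
    rw [div_le_iff₀ h2] at this
    exact this
  set α := alphaFn T σ' t' with hα
  have key : (rbf C T σ' t' : ℚ) < Umax * t' := by
    rcases le_or_gt α m with hαm | hαm
    · -- rbf ≤ v
      have h1 : rbf C T σ' t' ≤ v := by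
        rw [rbf, ← hα, hv]
        calc ∑ k ∈ Finset.range α, C (σ' k) = ∑ k ∈ Finset.range α, C (σ k) :=
              Finset.sum_congr rfl fun k hk =>
                by rw [hσ' k (lt_of_lt_of_le (Finset.mem_range.mp hk) hαm)]
        _ ≤ _ := Finset.sum_le_sum_of_subset (Finset.range_subset_range.mpr hαm)
      have h2 : (rbf C T σ' t' : ℚ) ≤ v := by exact_mod_cast h1
      have h3 : (t : ℚ) ≤ t' := by exact_mod_cast ht'
      nlinarith [mul_le_mul_of_nonneg_left h3 hU0.le]
    · -- m < α
      have hm1 : m ≤ α - 1 := by omega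
      have hS : ∑ k ∈ Finset.range (α - 1), T (σ' k) < t' :=
        alpha_min T σ' t' (α - 1) (by omega)
      set D := ∑ k ∈ Finset.Ico m (α - 1), T (σ' k) with hD
      set E := ∑ k ∈ Finset.Ico m (α - 1), C (σ' k) with hE
      have hsplitT : ∑ k ∈ Finset.range (α - 1), T (σ' k) = t + D := by
        rw [Finset.range_eq_Ico, ← Finset.sum_Ico_consecutive _ (Nat.zero_le m) hm1,
          ← Finset.range_eq_Ico]
        congr 1
        rw [ht]
        exact Finset.sum_congr rfl fun k hk => by rw [hσ' k (Finset.mem_range.mp hk)]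
      have hsplitC : rbf C T σ' t' = v + E + C (σ' (α - 1)) := by
        rw [rbf, ← hα]
        have : α = (α - 1) + 1 := by omega
        rw [this, Finset.sum_range_succ, Finset.range_eq_Ico,
          ← Finset.sum_Ico_consecutive _ (Nat.zero_le m) hm1, ← Finset.range_eq_Ico, hv]
        congr 2
        exact Finset.sum_congr rfl fun k hk => by rw [hσ' k (Finset.mem_range.mp hk)]
      have hEle : (E : ℚ) ≤ Umax * D := by
        rw [hE, hD]
        push_cast
        rw [Finset.mul_sum]
        exact Finset.sum_le_sum fun k _ => hCT (σ' k)
      have hlast : (C (σ' (α - 1)) : ℚ) ≤ Cmax := hCm _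
      have htD : (t : ℚ) + D < t' := by exact_mod_cast hsplitT ▸ hS
      have hrbf : (rbf C T σ' t' : ℚ) = v + E + C (σ' (α - 1)) := by
        rw [hsplitC]; push_cast; ring
      rw [hrbf]
      nlinarith [mul_lt_mul_of_pos_left htD hU0]
  refine ⟨key, ?_⟩
  obtain ⟨k0, hk0⟩ := hU'
  set τ : ℕ → Fin N := fun _ => k0 with hτ
  have hβT : t' ≤ alphaFn T τ t' * T k0 := by
    have := alpha_mem T hT τ t'
    simpa [hτ, Finset.sum_const, Finset.card_range, mul_comm] using this
  have hrbfτ : rbf C T τ t' = alphaFn T τ t' * C k0 := by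
    simp [rbf, hτ, Finset.sum_const, Finset.card_range, mul_comm]
  have hCk0 : (C k0 : ℚ) = Umax * T k0 := by
    have h2 : (T k0 : ℚ) ≠ 0 := by exact_mod_cast (hT k0).ne'
    field_simp at hk0
    linarith [hk0]
  have h1 : Umax * t' ≤ (rbf C T τ t' : ℚ) := by
    rw [hrbfτ]
    push_cast
    rw [hCk0]
    have : (t' : ℚ) ≤ alphaFn T τ t' * T k0 := by exact_mod_cast hβT
    nlinarith
  have h2 : (rbf C T σ' t' : ℚ) < rbf C T τ t' := lt_of_lt_of_le key h1
  have h3 : rbf C T σ' t' < rbf C T τ t' := by exact_mod_cast h2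
  exact lt_of_lt_of_le h3 (le_mrbf C T hT τ t')
end

section
/- Non-exactness of the mrbf test (counterexample): for the two-configuration task τ_1 with (C^1,T^1)=(1,2), (C^2,T^2)=(2,5), and any scenario σ of τ_1, there exists t ∈ {1,2,3} with rbf_σ(t) + 1 ≤ t; however, there is no t ∈ {1,2,3} with mrbf(t) + 1 ≤ t, since mrbf(1)=2, mrbf(2) ≥ 2, and mrbf(3) = 3. -/
open Finset

lemma fin2 (i : Fin 2) : i = 0 ∨ i = 1 := by fin_cases i <;> simp

lemma T_val (i : Fin 2) : (![2,5] : Fin 2 → ℕ) i = 2 ∨ (![2,5] : Fin 2 → ℕ) i = 5 := by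
  fin_cases i <;> simp

lemma alpha_one (σ : ℕ → Fin 2) (t : ℕ) (h0 : 0 < t)
    (h : t ≤ (![2,5] : Fin 2 → ℕ) (σ 0)) : alphaFn ![2,5] σ t = 1 := by
  have h1 : 1 ∈ {β : ℕ | t ≤ ∑ k ∈ Finset.range β, (![2,5] : Fin 2 → ℕ) (σ k)} := by
    simpa using h
  have hle : alphaFn ![2,5] σ t ≤ 1 := Nat.sInf_le h1
  have hne : alphaFn ![2,5] σ t ≠ 0 := by
    intro hz
    rw [alphaFn, Nat.sInf_eq_zero] at hz
    rcases hz with hz | hz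
    · simp at hz; omega
    · rw [hz] at h1; exact h1
  omega

lemma rbf_one_two (σ : ℕ → Fin 2) (t : ℕ) (h0 : 0 < t) (h2 : t ≤ 2) :
    rbf ![1,2] ![2,5] σ t = (![1,2] : Fin 2 → ℕ) (σ 0) := by
  have hT : t ≤ (![2,5] : Fin 2 → ℕ) (σ 0) := by
    rcases T_val (σ 0) with h | h <;> omega
  rw [rbf, alpha_one σ t h0 hT]
  simp

lemma alpha_three_zero (σ : ℕ → Fin 2) (h : σ 0 = 0) : alphaFn ![2,5] σ 3 = 2 := by
  have h2 : 2 ∈ {β : ℕ | 3 ≤ ∑ k ∈ Finset.range β, (![2,5] : Fin 2 → ℕ) (σ k)} := by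
    simp [Finset.sum_range_succ, h]
    rcases T_val (σ 1) with h' | h' <;> omega
  have hle : alphaFn ![2,5] σ 3 ≤ 2 := Nat.sInf_le h2
  have hmem : alphaFn ![2,5] σ 3 ∈ _ := Nat.sInf_mem ⟨2, h2⟩
  set a := alphaFn ![2,5] σ 3 with ha
  interval_cases a
  · simp at hmem
  · simp [Finset.sum_range_succ, h] at hmem
  · rfl

lemma rbf_three_zero (σ : ℕ → Fin 2) (h : σ 0 = 0) :
    rbf ![1,2] ![2,5] σ 3 = 1 + (![1,2] : Fin 2 → ℕ) (σ 1) := by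
  rw [rbf, alpha_three_zero σ h]
  simp [Finset.sum_range_succ, h]

lemma rbf_three_one (σ : ℕ → Fin 2) (h1 : σ 0 = 1) : rbf ![1,2] ![2,5] σ 3 = 2 := by
  rw [rbf, alpha_one σ 3 (by norm_num) (by simp [h1])]
  simp [h1]

/-- non-exactness of the mrbf test for the task with
configurations (1,2) and (2,5): (a) every scenario admits t ∈ {1,2,3}
with rbf_σ(t) + 1 ≤ t, but (b) mrbf(t) + 1 > t for all t ∈ {1,2,3},
with mrbf(1) = 2, mrbf(2) ≥ 2, mrbf(3) = 3. -/
theorem mrbf_test_pessimistic :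
    (∀ σ : ℕ → Fin 2, ∃ t ∈ ({1, 2, 3} : Finset ℕ),
        rbf ![1, 2] ![2, 5] σ t + 1 ≤ t) ∧
    (∀ t ∈ ({1, 2, 3} : Finset ℕ), t < mrbf ![1, 2] ![2, 5] t + 1) ∧
    mrbf ![1, 2] ![2, 5] 1 = 2 ∧
    2 ≤ mrbf ![1, 2] ![2, 5] 2 ∧
    mrbf ![1, 2] ![2, 5] 3 = 3 := by
  -- bounds on rbf values
  have hb1 : ∀ σ : ℕ → Fin 2, rbf ![1,2] ![2,5] σ 1 ≤ 2 := by
    intro σ; rw [rbf_one_two σ 1 one_pos le_add_self]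
    rcases fin2 (σ 0) with h | h <;> simp [h]
  have hb2 : ∀ σ : ℕ → Fin 2, rbf ![1,2] ![2,5] σ 2 ≤ 2 := by
    intro σ; rw [rbf_one_two σ 2 (by norm_num) le_rfl]
    rcases fin2 (σ 0) with h | h <;> simp [h]
  have hb3 : ∀ σ : ℕ → Fin 2, rbf ![1,2] ![2,5] σ 3 ≤ 3 := by
    intro σ
    rcases fin2 (σ 0) with h | h
    · rw [rbf_three_zero σ h]
      rcases fin2 (σ 1) with h' | h' <;> simp [h']
    · rw [rbf_three_one σ h]; omega
  -- witnesses
  have hw1 : rbf ![1,2] ![2,5] (fun _ => 1) 1 = 2 := by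
    rw [rbf_one_two _ 1 one_pos (by simp)]; simp
  have hw2 : rbf ![1,2] ![2,5] (fun _ => 1) 2 = 2 := by
    rw [rbf_one_two _ 2 (by norm_num) (by simp)]; simp
  set σ3 : ℕ → Fin 2 := fun n => if n = 0 then 0 else 1 with hσ3
  have hw3 : rbf ![1,2] ![2,5] σ3 3 = 3 := by
    rw [rbf, alpha_three_zero σ3 (by simp [hσ3])]
    simp [Finset.sum_range_succ, hσ3]
  have m1 : mrbf ![1,2] ![2,5] 1 = 2 := by
    apply le_antisymm
    · exact csSup_le ⟨2, _, hw1⟩ (by rintro v ⟨σ, rfl⟩; exact hb1 σ)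
    · exact le_csSup ⟨2, by rintro v ⟨σ, rfl⟩; exact hb1 σ⟩ ⟨_, hw1⟩
  have m2 : 2 ≤ mrbf ![1,2] ![2,5] 2 :=
    le_csSup ⟨2, by rintro v ⟨σ, rfl⟩; exact hb2 σ⟩ ⟨_, hw2⟩
  have m3 : mrbf ![1,2] ![2,5] 3 = 3 := by
    apply le_antisymm
    · exact csSup_le ⟨3, _, hw3⟩ (by rintro v ⟨σ, rfl⟩; exact hb3 σ)
    · exact le_csSup ⟨3, by rintro v ⟨σ, rfl⟩; exact hb3 σ⟩ ⟨_, hw3⟩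
  refine ⟨?_, ?_, m1, m2, m3⟩
  · intro σ
    rcases fin2 (σ 0) with h | h1
    · refine ⟨2, by simp, ?_⟩
      rw [rbf_one_two σ 2 (by norm_num) le_rfl, h]; simp
    · refine ⟨3, by simp, ?_⟩
      rw [rbf_three_one σ h1]
  · intro t ht
    fin_cases ht <;> omega
end
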